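/- Let ({f_i}_{i∈I}, T) be a general IFS with uniform contraction constant c ∈ (0,1) on a complete metric space (X,ρ), z_i the unique fixed point of f_i, and suppose there exists x ∈ X with Σ_{n≥1} (max_{i∈I_n} ρ(x, z_i))·c^n < ∞. Set b_x(l) := Σ_{k≥l} (max_{i∈I_k} ρ(x, z_i))·c^k. Then for every nonempty compact A ⊆ X there exists D(A) > 0 such that for every finite prefix word ω of T and every n ≥ 1, ρ_H( ⋃_{ω′ ∈ T_ω^{[1,n]}} f_{ω′}(A), π(T_ω) ) ≤ D(A)·c^{−(|ω|+1)}·max{ c^{n+|ω|+1}, b_x(n+|ω|+1) }. In particular, for every such ω, the sets ⋃_{ω′ ∈ T_ω^{[1,n]}} f_{ω′}(A) converge to the limit set π(T_ω) in the Hausdorff distance as n → ∞, independently of A. -/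

import Mathlib

/-- `seqComp f ω n = f_{ω₁} ∘ ⋯ ∘ f_{ω_n}` (with `ω` indexed from `0`). -/
def seqComp {X I : Type*} (f : I → X → X) (ω : ℕ → I) : ℕ → X → X
  | 0 => id
  | n + 1 => seqComp f ω n ∘ f (ω n)

/-- `wcat a w σ` is the concatenation of the finite word consisting of the first `a`
letters of `w` with the infinite word `σ`. -/
def wcat {I : Type*} (a : ℕ) (w σ : ℕ → I) : ℕ → I :=
  fun k => if k < a then w k else σ (k - a)

/-- `Tsub T a w` is the conditioned subtree `T_ω` for the finite word `ω` consisting of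
the first `a` letters of `w`. -/
def Tsub {I : Type*} (T : Set (ℕ → I)) (a : ℕ) (w : ℕ → I) : Set (ℕ → I) :=
  {τ | wcat a w τ ∈ T}

/-- `IsPrefixWord T a w` : the first `a` letters of `w` form an initial word of some
element of `T`. -/
def IsPrefixWord {I : Type*} (T : Set (ℕ → I)) (a : ℕ) (w : ℕ → I) : Prop :=
  ∃ τ ∈ T, ∀ k < a, τ k = w k

/-- `posMax T z x n = max_{i ∈ I_{n+1}} ρ(x, z_i)`, where `I_{n+1}` is the set of letters
occurring at (0-based) position `n` in elements of the tree `T`. -/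
noncomputable def posMax {X I : Type*} [MetricSpace X]
    (T : Set (ℕ → I)) (z : I → X) (x : X) (n : ℕ) : ℝ :=
  sSup ((fun i => dist x (z i)) '' ((fun ω : ℕ → I => ω n) '' T))

/-- `bX T z x c a = b_x(a+1) = ∑_{k ≥ a+1} (max_{i∈I_k} ρ(x,z_i))·c^k` (1-based `k`). -/
noncomputable def bX {X I : Type*} [MetricSpace X]
    (T : Set (ℕ → I)) (z : I → X) (x : X) (c : ℝ) (a : ℕ) : ℝ :=
  ∑' k : ℕ, posMax T z x (a + k) * c ^ (a + 1 + k)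


section Aux

variable {X I : Type*} [MetricSpace X]

lemma seqComp_lipschitz {c : ℝ} (hc0 : 0 ≤ c)
    {f : I → X → X} (hf : ∀ i, ∀ u v : X, dist (f i u) (f i v) ≤ c * dist u v)
    (ω : ℕ → I) (n : ℕ) (u v : X) :
    dist (seqComp f ω n u) (seqComp f ω n v) ≤ c ^ n * dist u v := by
  induction n generalizing u v with
  | zero => simp [seqComp]
  | succ n ih =>
    calc dist (seqComp f ω (n+1) u) (seqComp f ω (n+1) v)
        = dist (seqComp f ω n (f (ω n) u)) (seqComp f ω n (f (ω n) v)) := rfl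
      _ ≤ c ^ n * dist (f (ω n) u) (f (ω n) v) := ih _ _
      _ ≤ c ^ n * (c * dist u v) :=
          mul_le_mul_of_nonneg_left (hf _ _ _) (pow_nonneg hc0 n)
      _ = c ^ (n+1) * dist u v := by ring

lemma seqComp_congr (f : I → X → X) {ω ω' : ℕ → I} {n : ℕ}
    (h : ∀ k < n, ω k = ω' k) : seqComp f ω n = seqComp f ω' n := by
  induction n with
  | zero => rfl
  | succ n ih =>
    have h1 : seqComp f ω n = seqComp f ω' n :=
      ih (fun k hk => h k (hk.trans (Nat.lt_succ_self n)))
    show seqComp f ω n ∘ f (ω n) = seqComp f ω' n ∘ f (ω' n)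
    rw [h1, h n (Nat.lt_succ_self n)]

variable [TopologicalSpace I] [DiscreteTopology I]

lemma projFinite {T : Set (ℕ → I)} (hTc : IsCompact T) (n : ℕ) :
    ((fun ω : ℕ → I => ω n) '' T).Finite :=
  (hTc.image (continuous_apply n)).finite ⟨by infer_instance⟩

lemma dist_le_posMax {T : Set (ℕ → I)} (hTc : IsCompact T) (z : I → X) (x : X) {n : ℕ}
    {τ : ℕ → I} (hτ : τ ∈ T) : dist x (z (τ n)) ≤ posMax T z x n := by
  apply le_csSup (((projFinite hTc n).image _).bddAbove)
  exact ⟨τ n, ⟨τ, hτ, rfl⟩, rfl⟩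

lemma posMax_nonneg {T : Set (ℕ → I)} (hTc : IsCompact T) (hTne : T.Nonempty)
    (z : I → X) (x : X) (n : ℕ) : 0 ≤ posMax T z x n := by
  obtain ⟨τ, hτ⟩ := hTne
  exact le_trans dist_nonneg (dist_le_posMax hTc z x hτ)

lemma bX_nonneg {T : Set (ℕ → I)} (hTc : IsCompact T) (hTne : T.Nonempty)
    (z : I → X) (x : X) {c : ℝ} (hc0 : 0 ≤ c) (a : ℕ) : 0 ≤ bX T z x c a :=
  tsum_nonneg fun k =>
    mul_nonneg (posMax_nonneg hTc hTne z x _) (pow_nonneg hc0 _)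

end Aux

/-- For a general IFS with the summability condition, for every nonempty
compact `A ⊆ X` there is `D(A) > 0` such that for every finite prefix word `ω` of `T` and
every `n ≥ 1`,
`ρ_H(⋃_{ω' ∈ T_ω^{[1,n]}} f_{ω'}(A), π(T_ω)) ≤ D(A)·c^{-(|ω|+1)}·max{c^{n+|ω|+1}, b_x(n+|ω|+1)}`;
in particular these unions converge to the limit set `π(T_ω)` in the Hausdorff distance. -/
theorem stmt16 {X I : Type*} [MetricSpace X] [CompleteSpace X]
    [Countable I] [TopologicalSpace I] [DiscreteTopology I]
    (c : ℝ) (hc0 : 0 < c) (hc1 : c < 1)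
    (T : Set (ℕ → I)) (hTne : T.Nonempty) (hTc : IsCompact T)
    (f : I → X → X) (hf : ∀ i, ∀ u v : X, dist (f i u) (f i v) ≤ c * dist u v)
    (z : I → X) (hz : ∀ i, f i (z i) = z i)
    (x : X) (hsum : Summable fun n : ℕ => posMax T z x n * c ^ (n + 1))
    (π : (ℕ → I) → X)
    (hπ : ∀ (a : ℕ) (w τ : ℕ → I), wcat a w τ ∈ T →
      Filter.Tendsto (fun n => seqComp f τ n x) Filter.atTop (nhds (π τ))) :
    ∀ A : Set X, A.Nonempty → IsCompact A →
      (∃ D > (0 : ℝ), ∀ (a : ℕ) (w : ℕ → I), IsPrefixWord T a w → ∀ n : ℕ, 1 ≤ n →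
        Metric.hausdorffDist
          (⋃ w' : ℕ → I, ⋃ (_ : IsPrefixWord (Tsub T a w) n w'), seqComp f w' n '' A)
          (π '' Tsub T a w)
        ≤ D * c⁻¹ ^ (a + 1) * max (c ^ (n + a + 1)) (bX T z x c (n + a))) ∧
      (∀ (a : ℕ) (w : ℕ → I), IsPrefixWord T a w →
        Filter.Tendsto
          (fun n : ℕ => Metric.hausdorffDist
            (⋃ w' : ℕ → I, ⋃ (_ : IsPrefixWord (Tsub T a w) n w'), seqComp f w' n '' A)
            (π '' Tsub T a w))
          Filter.atTop (nhds 0)) := by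
  intro A hAne hAc
  obtain ⟨a₀, ha₀⟩ := hAne
  obtain ⟨R₀, hR₀⟩ := hAc.isBounded.subset_closedBall x
  set R : ℝ := max R₀ 0 with hRdef
  have hR0 : (0:ℝ) ≤ R := le_max_right _ _
  have hRA : ∀ p ∈ A, dist p x ≤ R := fun p hp =>
    le_trans (Metric.mem_closedBall.1 (hR₀ hp)) (le_max_left _ _)
  have hcne : c ≠ 0 := ne_of_gt hc0
  set D : ℝ := R + 2 with hDdef
  have hD0 : 0 < D := by positivity
  -- letters of conditioned subtrees
  have hletter : ∀ (a : ℕ) (w : ℕ → I), ∀ τ ∈ Tsub T a w, ∀ m : ℕ,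
      dist x (z (τ m)) ≤ posMax T z x (a + m) := by
    intro a w τ hτ m
    have h1 : (wcat a w τ) (a + m) = τ m := by
      rw [wcat, if_neg (by omega)]
      congr 1
      omega
    have h2 := dist_le_posMax hTc z x (n := a + m) (τ := wcat a w τ) hτ
    rwa [h1] at h2
  -- core tail estimate
  have core : ∀ (a : ℕ) (w : ℕ → I), ∀ τ ∈ Tsub T a w, ∀ n : ℕ,
      dist (seqComp f τ n x) (π τ) ≤ ((1 + c) * c⁻¹ ^ (a + 1)) * bX T z x c (a + n) := by
    intro a w τ hτ n
    set d : ℕ → ℝ := fun m =>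
      ((1 + c) * c⁻¹ ^ (a + 1)) * (posMax T z x (a + m) * c ^ (a + m + 1)) with hd
    have hdist : ∀ m, dist (seqComp f τ m x) (seqComp f τ (m+1) x) ≤ d m := by
      intro m
      have h2 : dist (seqComp f τ m x) (seqComp f τ (m+1) x)
          ≤ c ^ m * dist x (f (τ m) x) :=
        seqComp_lipschitz hc0.le hf τ m _ _
      have h4 := hf (τ m) (z (τ m)) x
      rw [hz (τ m)] at h4
      have h3 : dist x (f (τ m) x) ≤ (1 + c) * dist x (z (τ m)) := by
        calc dist x (f (τ m) x)
            ≤ dist x (z (τ m)) + dist (z (τ m)) (f (τ m) x) := dist_triangle _ _ _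
          _ ≤ dist x (z (τ m)) + c * dist (z (τ m)) x := by linarith
          _ = (1 + c) * dist x (z (τ m)) := by rw [dist_comm (z (τ m)) x]; ring
      have h5 := hletter a w τ hτ m
      have h6 : dist (seqComp f τ m x) (seqComp f τ (m+1) x)
          ≤ c ^ m * ((1 + c) * posMax T z x (a + m)) := by
        refine h2.trans ?_
        refine mul_le_mul_of_nonneg_left ?_ (pow_nonneg hc0.le m)
        exact h3.trans (mul_le_mul_of_nonneg_left h5 (by linarith))
      refine h6.trans_eq ?_
      simp only [hd, inv_pow]
      field_simp
      ring
    have hdsum : Summable d := by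
      apply Summable.mul_left
      have hs := (summable_nat_add_iff
        (f := fun m => posMax T z x m * c ^ (m + 1)) a).2 hsum
      refine hs.congr fun m => ?_
      rw [add_comm m a]
    have htend := hπ a w τ hτ
    have hmain := dist_le_tsum_of_dist_le_of_tendsto d hdist hdsum htend n
    refine hmain.trans_eq ?_
    rw [bX, ← tsum_mul_left]
    refine tsum_congr fun m => ?_
    simp only [hd]
    rw [show a + (n + m) = a + n + m by ring]
    ring
  -- main quantitative bound (for all n)
  have key : ∀ (a : ℕ) (w : ℕ → I), IsPrefixWord T a w → ∀ n : ℕ,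
      Metric.hausdorffDist
        (⋃ w' : ℕ → I, ⋃ (_ : IsPrefixWord (Tsub T a w) n w'), seqComp f w' n '' A)
        (π '' Tsub T a w)
      ≤ D * c⁻¹ ^ (a + 1) * max (c ^ (n + a + 1)) (bX T z x c (n + a)) := by
    intro a w _ n
    set K := Tsub T a w with hK
    set E : ℝ := ((1 + c) * c⁻¹ ^ (a + 1)) * bX T z x c (a + n) with hE
    have hbXnn : 0 ≤ bX T z x c (a + n) := bX_nonneg hTc hTne z x hc0.le _
    have hE0 : 0 ≤ E := by positivity
    set r : ℝ := c ^ n * R + E with hr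
    have hr0 : 0 ≤ r := by positivity
    -- every image point is r-close to the limit set and conversely
    have hpoint : ∀ τ ∈ K, ∀ p ∈ A, dist (seqComp f τ n p) (π τ) ≤ r := by
      intro τ hτ p hp
      calc dist (seqComp f τ n p) (π τ)
          ≤ dist (seqComp f τ n p) (seqComp f τ n x) + dist (seqComp f τ n x) (π τ) :=
            dist_triangle _ _ _
        _ ≤ c ^ n * dist p x + E := by
            refine add_le_add (seqComp_lipschitz hc0.le hf τ n p x) ?_
            exact core a w τ hτ n
        _ ≤ c ^ n * R + E := by
            have := hRA p hp
            nlinarith [pow_nonneg hc0.le n]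
    have hHD : Metric.hausdorffDist
        (⋃ w' : ℕ → I, ⋃ (_ : IsPrefixWord K n w'), seqComp f w' n '' A)
        (π '' K) ≤ r := by
      apply Metric.hausdorffDist_le_of_mem_dist hr0
      · intro p hp
        simp only [Set.mem_iUnion] at hp
        obtain ⟨w', hw', q, hq, rfl⟩ := hp
        obtain ⟨σ, hσ, hag⟩ := hw'
        have hcongr : seqComp f w' n = seqComp f σ n :=
          seqComp_congr f (fun k hk => (hag k hk).symm)
        refine ⟨π σ, ⟨σ, hσ, rfl⟩, ?_⟩
        rw [hcongr]
        exact hpoint σ hσ q hq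
      · intro y hy
        obtain ⟨τ, hτ, rfl⟩ := hy
        refine ⟨seqComp f τ n a₀, ?_, ?_⟩
        · simp only [Set.mem_iUnion]
          exact ⟨τ, ⟨τ, hτ, fun k _ => rfl⟩, a₀, ha₀, rfl⟩
        · rw [dist_comm]
          exact hpoint τ hτ a₀ ha₀
    refine hHD.trans ?_
    -- compare r with the stated bound
    set M : ℝ := max (c ^ (n + a + 1)) (bX T z x c (n + a)) with hM
    have hM1 : c ^ (n + a + 1) ≤ M := le_max_left _ _
    have hM2 : bX T z x c (n + a) ≤ M := le_max_right _ _
    have hMpos : 0 < M := lt_of_lt_of_le (pow_pos hc0 _) hM1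
    have hsw : a + n = n + a := by ring
    have hstep : R * c ^ (n + a + 1) + (1 + c) * bX T z x c (n + a) ≤ (R + 2) * M := by
      have hb1 : 0 ≤ bX T z x c (n + a) := by rw [← hsw]; exact hbXnn
      nlinarith [mul_le_mul_of_nonneg_left hM1 hR0,
        mul_le_mul_of_nonneg_right hc1.le hb1]
    calc r = c⁻¹ ^ (a + 1) * (R * c ^ (n + a + 1) + (1 + c) * bX T z x c (n + a)) := by
          rw [hr, hE, hsw, inv_pow]
          field_simp
          ring
      _ ≤ c⁻¹ ^ (a + 1) * ((R + 2) * M) :=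
          mul_le_mul_of_nonneg_left hstep (by positivity)
      _ = D * c⁻¹ ^ (a + 1) * M := by rw [hDdef]; ring
  refine ⟨⟨D, hD0, fun a w hw n _ => key a w hw n⟩, ?_⟩
  -- convergence
  intro a w hw
  apply squeeze_zero' (Filter.Eventually.of_forall fun n => Metric.hausdorffDist_nonneg)
    (Filter.Eventually.of_forall fun n => key a w hw n)
  have t1 : Filter.Tendsto (fun n : ℕ => c ^ (n + a + 1)) Filter.atTop (nhds 0) :=
    (tendsto_pow_atTop_nhds_zero_of_lt_one hc0.le hc1).comp
      (Filter.tendsto_add_atTop_nat (a + 1))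
  have hbXeq : ∀ m : ℕ, bX T z x c m
      = ∑' k : ℕ, (fun j => posMax T z x j * c ^ (j + 1)) (k + m) := by
    intro m
    refine tsum_congr fun k => ?_
    simp only
    rw [add_comm m k]
    ring
  have t2 : Filter.Tendsto (fun n : ℕ => bX T z x c (n + a)) Filter.atTop (nhds 0) := by
    have h := (tendsto_sum_nat_add (fun j => posMax T z x j * c ^ (j + 1))).comp
      (Filter.tendsto_add_atTop_nat a)
    refine h.congr fun n => ?_
    exact (hbXeq (n + a)).symm
  have t3 := (t1.max t2).const_mul (D * c⁻¹ ^ (a + 1))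
  simpa [mul_assoc] using t3
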